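/- Let N ≥ 2 and let T be an order-N real tensor with dimensions s₁×⋯×s_N. Then there exists an order-N tensor δT of rank one, i.e., of the form δT(i₁,…,i_N) = v(i₁) x₂(i₂) ⋯ x_N(i_N) for some v ∈ ℝ^{s₁} and unit vectors x₂,…,x_N, such that ‖δT‖₂ = I(T) and I(T + δT) = 0; that is, any tensor can be perturbed to have infinite condition number by a perturbation of spectral norm exactly ‖T‖₂/κ(T). -/

import Mathlib

open scoped BigOperators

/-- Euclidean (ℓ²) norm of a vector. -/
noncomputable def vnorm {n : ℕ} (v : Fin n → ℝ) : ℝ := Real.sqrt (∑ i, v i ^ 2)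

/-- Frobenius norm: the ℓ² norm of all entries. -/
noncomputable def fnorm {ι : Type*} [Fintype ι] (T : ι → ℝ) : ℝ := Real.sqrt (∑ i, T i ^ 2)

/-- Matrix–vector product. -/
noncomputable def matvec {m n : ℕ} (M : Fin m → Fin n → ℝ) (x : Fin n → ℝ) : Fin m → ℝ :=
  fun i => ∑ j, M i j * x j

/-- Matrix–matrix product. -/
noncomputable def matmul {m n p : ℕ} (A : Fin m → Fin n → ℝ) (B : Fin n → Fin p → ℝ) :
    Fin m → Fin p → ℝ :=
  fun i j => ∑ k, A i k * B k j

/-- Matrix spectral norm. -/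
noncomputable def mnorm {m n : ℕ} (M : Fin m → Fin n → ℝ) : ℝ :=
  sSup {r | ∃ x : Fin n → ℝ, vnorm x = 1 ∧ r = vnorm (matvec M x)}

/-- `I(M)`: the infimum of `‖Mx‖₂` over unit vectors `x`. -/
noncomputable def minf {m n : ℕ} (M : Fin m → Fin n → ℝ) : ℝ :=
  sInf {r | ∃ x : Fin n → ℝ, vnorm x = 1 ∧ r = vnorm (matvec M x)}

/-- Matrix Frobenius norm. -/
noncomputable def mfro {m n : ℕ} (M : Fin m → Fin n → ℝ) : ℝ :=
  Real.sqrt (∑ i, ∑ j, M i j ^ 2)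

/-- The multilinear map `g_T` associated to an order-`(d+1)` tensor `T`;
mode `0` is the output mode, modes `1,…,d` are the input modes. -/
noncomputable def gmap {d : ℕ} {s : Fin (d+1) → ℕ} (T : (∀ i, Fin (s i)) → ℝ)
    (x : ∀ i, Fin (s i) → ℝ) : Fin (s 0) → ℝ :=
  fun i₁ => ∑ j : (∀ i, Fin (s i)),
    if j 0 = i₁ then T j * ∏ k ∈ Finset.univ.erase (0 : Fin (d+1)), x k (j k) else 0

/-- The inputs `x i`, `i ≠ 0`, are all unit vectors. -/
def unitInputs {d : ℕ} {s : Fin (d+1) → ℕ} (x : ∀ i, Fin (s i) → ℝ) : Prop :=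
  ∀ i : Fin (d+1), i ≠ 0 → vnorm (x i) = 1

/-- Tensor spectral norm: supremum of `‖g_T(x₂,…,x_N)‖₂` over unit inputs. -/
noncomputable def tnorm {d : ℕ} {s : Fin (d+1) → ℕ} (T : (∀ i, Fin (s i)) → ℝ) : ℝ :=
  sSup {r | ∃ x : (∀ i, Fin (s i) → ℝ), unitInputs x ∧ r = vnorm (gmap T x)}

/-- `I(T)`: infimum of `‖g_T(x₂,…,x_N)‖₂` over unit inputs. -/
noncomputable def tinf {d : ℕ} {s : Fin (d+1) → ℕ} (T : (∀ i, Fin (s i)) → ℝ) : ℝ :=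
  sInf {r | ∃ x : (∀ i, Fin (s i) → ℝ), unitInputs x ∧ r = vnorm (gmap T x)}

/-- Tensor condition number `κ(T) = ‖T‖₂ / I(T)`. -/
noncomputable def tcond {d : ℕ} {s : Fin (d+1) → ℕ} (T : (∀ i, Fin (s i)) → ℝ) : ℝ :=
  tnorm T / tinf T

/-- Dimensions after replacing the size of mode `n` by `J`. -/
def repl {d : ℕ} (s : Fin (d+1) → ℕ) (n : Fin (d+1)) (J : ℕ) : Fin (d+1) → ℕ :=
  fun i => if i = n then J else s i

/-- Mode-`n` product `T ×ₙ A` with a matrix `A : Fin J → Fin (s n) → ℝ`: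
`(T ×ₙ A)(i₁,…,a,…,i_N) = ∑ₖ T(i₁,…,k,…,i_N) A(a,k)`. -/
noncomputable def modeProd {d : ℕ} {s : Fin (d+1) → ℕ} (T : (∀ i, Fin (s i)) → ℝ)
    (n : Fin (d+1)) {J : ℕ} (A : Fin J → Fin (s n) → ℝ) :
    (∀ i, Fin (repl s n J i)) → ℝ :=
  fun j => ∑ k : Fin (s n),
    T (fun i => if h : i = n then Fin.cast (congrArg s h.symm) k
        else Fin.cast (show repl s n J i = s i by simp [repl, h]) (j i)) *
      A (Fin.cast (show repl s n J n = J by simp [repl]) (j n)) k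

/-- Multilinear transformation of a tensor: `multiProd X B = X ×₁ B₁ ×₂ ⋯ ×_N B_N`. -/
noncomputable def multiProd {d : ℕ} {s R : Fin (d+1) → ℕ}
    (X : (∀ i, Fin (s i)) → ℝ) (B : ∀ l, Fin (R l) → Fin (s l) → ℝ) :
    (∀ l, Fin (R l)) → ℝ :=
  fun j => ∑ k : (∀ l, Fin (s l)), X k * ∏ l, B l (j l) (k l)

/-- Dimensions of `partialContract`: modes in `E` are kept at size `s l`,
the other modes are contracted down to size `R l`. -/
def keepDims {d : ℕ} (s R : Fin (d+1) → ℕ) (E : Finset (Fin (d+1))) : Fin (d+1) → ℕ :=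
  fun l => if l ∈ E then s l else R l

/-- Contract every mode `l ∉ E` of `X` with `(A l)ᵀ`; keep the modes in `E` untouched. -/
noncomputable def partialContract {d : ℕ} {s R : Fin (d+1) → ℕ}
    (X : (∀ i, Fin (s i)) → ℝ) (A : ∀ l, Fin (s l) → Fin (R l) → ℝ)
    (E : Finset (Fin (d+1))) : (∀ l, Fin (keepDims s R E l)) → ℝ :=
  multiProd X (fun l a b =>
    if h : l ∈ E then
      (if b = Fin.cast (show keepDims s R E l = s l by simp [keepDims, h]) a then (1:ℝ) else 0)
    else A l b (Fin.cast (show keepDims s R E l = R l by simp [keepDims, h]) a))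

/-!
Choose unit inputs `x` at which `‖g_T(x)‖₂` attains its minimum `I(T)` (a compactness
argument) and put `v = -g_T(x)`. For `δT = v ⊗ x₂ ⊗ ⋯ ⊗ x_N` one has
`g_{δT}(y) = (∏ₖ ⟨xₖ, yₖ⟩) v`, so by Cauchy–Schwarz `‖δT‖₂ = ‖v‖₂ = I(T)`, the maximum being
attained at `y = x`; and `g_{T+δT}(x) = g_T(x) + v = 0`, so `I(T + δT) = 0`.
-/

open Finset

section VectorNorm

variable {n : ℕ}

lemma vnorm_nonneg (v : Fin n → ℝ) : 0 ≤ vnorm v := Real.sqrt_nonneg _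

lemma vnorm_smul (c : ℝ) (v : Fin n → ℝ) : vnorm (c • v) = |c| * vnorm v := by
  simp only [vnorm, Pi.smul_apply, smul_eq_mul, mul_pow, ← mul_sum]
  rw [Real.sqrt_mul (sq_nonneg c), Real.sqrt_sq_eq_abs]

lemma vnorm_neg (v : Fin n → ℝ) : vnorm (-v) = vnorm v := by
  simp [vnorm]

lemma vnorm_zero : vnorm (0 : Fin n → ℝ) = 0 := by
  simp [vnorm]

lemma dotProduct_self_eq_one_of_vnorm_eq_one {v : Fin n → ℝ} (hv : vnorm v = 1) :
    v ⬝ᵥ v = 1 := by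
  simpa [dotProduct, sq] using Real.sqrt_eq_one.mp hv

lemma abs_dotProduct_le_vnorm_mul_vnorm (v w : Fin n → ℝ) :
    |v ⬝ᵥ w| ≤ vnorm v * vnorm w := by
  rw [← Real.sqrt_sq_eq_abs, vnorm, vnorm, ← Real.sqrt_mul (sum_nonneg fun i _ => sq_nonneg _)]
  exact Real.sqrt_le_sqrt (sum_mul_sq_le_sq_mul_sq _ _ _)

lemma abs_le_vnorm (v : Fin n → ℝ) (i : Fin n) : |v i| ≤ vnorm v := by
  rw [← Real.sqrt_sq_eq_abs]
  exact Real.sqrt_le_sqrt (single_le_sum (f := fun j => v j ^ 2) (fun j _ => sq_nonneg _)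
    (mem_univ i))

lemma continuous_vnorm : Continuous (vnorm (n := n)) := by
  unfold vnorm
  fun_prop

lemma isCompact_setOf_vnorm_eq_one : IsCompact {v : Fin n → ℝ | vnorm v = 1} := by
  refine Metric.isCompact_of_isClosed_isBounded
    (isClosed_eq continuous_vnorm continuous_const) ?_
  refine (Metric.isBounded_closedBall (x := 0) (r := 1)).subset fun v hv => ?_
  rw [Metric.mem_closedBall, dist_zero_right, pi_norm_le_iff_of_nonneg zero_le_one]
  exact fun i => (abs_le_vnorm v i).trans_eq hv

lemma exists_vnorm_eq_one (hn : 0 < n) : ∃ v : Fin n → ℝ, vnorm v = 1 :=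
  ⟨Pi.single ⟨0, hn⟩ 1, by simp [vnorm, sq, Pi.single_apply]⟩

end VectorNorm

section Tensor

variable {d : ℕ} {s : Fin (d+1) → ℕ}

noncomputable def rankOneTensor (v : Fin (s 0) → ℝ) (x : ∀ i, Fin (s i) → ℝ) :
    (∀ i, Fin (s i)) → ℝ :=
  fun jj => v (jj 0) * ∏ k ∈ univ.erase (0 : Fin (d+1)), x k (jj k)

lemma gmap_congr (T : (∀ i, Fin (s i)) → ℝ) {x y : ∀ i, Fin (s i) → ℝ}
    (h : ∀ i, i ≠ 0 → x i = y i) : gmap T x = gmap T y := by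
  funext i₁
  refine sum_congr rfl fun j _ => ?_
  congr 2
  exact prod_congr rfl fun k hk => by rw [h k (ne_of_mem_erase hk)]

lemma gmap_add (T U : (∀ i, Fin (s i)) → ℝ) (x : ∀ i, Fin (s i) → ℝ) :
    gmap (T + U) x = gmap T x + gmap U x := by
  funext i₁
  simp only [gmap, Pi.add_apply, ← sum_add_distrib]
  refine sum_congr rfl fun j _ => ?_
  split_ifs <;> ring

lemma gmap_rankOneTensor (v : Fin (s 0) → ℝ) (x y : ∀ i, Fin (s i) → ℝ) :
    gmap (rankOneTensor v x) y = (∏ k ∈ univ.erase (0 : Fin (d+1)), x k ⬝ᵥ y k) • v := by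
  funext i₁
  -- Write the constraint `j 0 = i₁` as a factor at mode `0`, so that the sum over all
  -- multi-indices `j` factors into a product of sums, one per mode.
  set f : ∀ i : Fin (d+1), Fin (s i) → ℝ := fun i t =>
    if h : i = 0 then (if Fin.cast (congrArg s h) t = i₁ then 1 else 0) else x i t * y i t
  have hf_ne : ∀ k ∈ univ.erase (0 : Fin (d+1)), f k = fun t => x k t * y k t :=
    fun k hk => funext fun t => dif_neg (ne_of_mem_erase hk)
  have hf : ∀ j : (∀ i, Fin (s i)),
      (if j 0 = i₁ then rankOneTensor v x j * ∏ k ∈ univ.erase 0, y k (j k) else 0)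
        = v i₁ * ∏ i, f i (j i) := by
    intro j
    rw [← mul_prod_erase univ (fun i => f i (j i)) (mem_univ 0),
      prod_congr rfl fun k hk => congrFun (hf_ne k hk) (j k), prod_mul_distrib]
    by_cases hj : j 0 = i₁
    · simp only [f, hj, rankOneTensor, ↓reduceIte, ↓reduceDIte, Fin.cast_eq_self, one_mul]
      ring
    · simp [f, hj]
  have hf_sum : ∏ i, ∑ t, f i t = ∏ k ∈ univ.erase 0, x k ⬝ᵥ y k := by
    rw [← mul_prod_erase univ _ (mem_univ 0), prod_congr rfl fun k hk => by rw [hf_ne k hk]]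
    simp [f, dotProduct]
  simp only [gmap, hf, ← mul_sum, ← Fintype.prod_sum, hf_sum, Pi.smul_apply, smul_eq_mul]
  ring

lemma continuous_gmap (T : (∀ i, Fin (s i)) → ℝ) :
    Continuous (gmap T) := by
  refine continuous_pi fun i₁ => continuous_finsetSum _ fun j _ => ?_
  split_ifs <;> fun_prop

lemma tinf_eq_of_forall_le {T : (∀ i, Fin (s i)) → ℝ} {x : ∀ i, Fin (s i) → ℝ}
    (hx : unitInputs x) (h : ∀ y, unitInputs y → vnorm (gmap T x) ≤ vnorm (gmap T y)) :
    tinf T = vnorm (gmap T x) :=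
  IsLeast.csInf_eq ⟨⟨x, hx, rfl⟩, by rintro _ ⟨y, hy, rfl⟩; exact h y hy⟩

lemma tnorm_eq_of_forall_le {T : (∀ i, Fin (s i)) → ℝ} {x : ∀ i, Fin (s i) → ℝ}
    (hx : unitInputs x) (h : ∀ y, unitInputs y → vnorm (gmap T y) ≤ vnorm (gmap T x)) :
    tnorm T = vnorm (gmap T x) :=
  IsGreatest.csSup_eq ⟨⟨x, hx, rfl⟩, by rintro _ ⟨y, hy, rfl⟩; exact h y hy⟩

lemma tinf_eq_zero_of_gmap_eq_zero {T : (∀ i, Fin (s i)) → ℝ} {x : ∀ i, Fin (s i) → ℝ}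
    (hx : unitInputs x) (h : gmap T x = 0) : tinf T = 0 := by
  rw [tinf_eq_of_forall_le hx fun y _ => h ▸ vnorm_zero.trans_le (vnorm_nonneg _), h, vnorm_zero]

lemma exists_unitInputs_vnorm_gmap_eq_tinf (hs : ∀ i, i ≠ 0 → 0 < s i)
    (T : (∀ i, Fin (s i)) → ℝ) :
    ∃ x, unitInputs x ∧ vnorm (gmap T x) = tinf T := by
  classical
  -- Pinning the unused input `x 0` to `0` makes the set of inputs compact.
  set K : Set (∀ i, Fin (s i) → ℝ) :=
    Set.univ.pi fun i => if i = 0 then {0} else {v | vnorm v = 1}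
  have hK : ∀ x ∈ K, unitInputs x := fun x hx i hi => by
    simpa [hi] using Set.mem_univ_pi.mp hx i
  have hK_compact : IsCompact K := isCompact_univ_pi fun i => by
    split_ifs
    exacts [isCompact_singleton, isCompact_setOf_vnorm_eq_one]
  have hK_nonempty : K.Nonempty := Set.univ_pi_nonempty_iff.mpr fun i => by
    split_ifs with hi
    exacts [Set.singleton_nonempty _, exists_vnorm_eq_one (hs i hi)]
  obtain ⟨x, hxK, hmin⟩ := hK_compact.exists_isMinOn hK_nonempty
    (continuous_vnorm.comp (continuous_gmap T)).continuousOn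
  refine ⟨x, hK x hxK, (tinf_eq_of_forall_le (hK x hxK) fun y hy => ?_).symm⟩
  have hyK : Function.update y 0 0 ∈ K := Set.mem_univ_pi.mpr fun i => by
    by_cases hi : i = 0
    · subst hi; simp
    · simpa [hi] using hy i hi
  calc vnorm (gmap T x) ≤ vnorm (gmap T (Function.update y 0 0)) := hmin hyK
    _ = vnorm (gmap T y) := by
      rw [gmap_congr T fun i hi => Function.update_of_ne hi _ _]

lemma gmap_rankOneTensor_self (v : Fin (s 0) → ℝ) {x : ∀ i, Fin (s i) → ℝ}
    (hx : unitInputs x) : gmap (rankOneTensor v x) x = v := by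
  rw [gmap_rankOneTensor, prod_eq_one fun k hk =>
    dotProduct_self_eq_one_of_vnorm_eq_one (hx k (ne_of_mem_erase hk)), one_smul]

lemma tnorm_rankOneTensor (v : Fin (s 0) → ℝ) {x : ∀ i, Fin (s i) → ℝ} (hx : unitInputs x) :
    tnorm (rankOneTensor v x) = vnorm v := by
  have hle : ∀ y, unitInputs y → vnorm (gmap (rankOneTensor v x) y) ≤ vnorm v := by
    intro y hy
    rw [gmap_rankOneTensor, vnorm_smul, abs_prod]
    refine mul_le_of_le_one_left (vnorm_nonneg v) (prod_le_one (fun _ _ => abs_nonneg _) ?_)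
    intro k hk
    have hk0 := ne_of_mem_erase hk
    simpa [hx k hk0, hy k hk0] using abs_dotProduct_le_vnorm_mul_vnorm (x k) (y k)
  have hself := gmap_rankOneTensor_self v hx
  rw [tnorm_eq_of_forall_le hx fun y hy => by rw [hself]; exact hle y hy, hself]

end Tensor

theorem rank_one_perturbation_to_infinite_cond_general {d : ℕ}
    {s : Fin (d+1) → ℕ} (hs : ∀ i, 0 < s i)
    (T : (∀ i, Fin (s i)) → ℝ) :
    ∃ (v : Fin (s 0) → ℝ) (x : ∀ i, Fin (s i) → ℝ), unitInputs x ∧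
      tnorm (fun jj : ∀ i, Fin (s i) =>
        v (jj 0) * ∏ k ∈ Finset.univ.erase (0 : Fin (d+1)), x k (jj k)) = tinf T ∧
      tinf (fun jj : ∀ i, Fin (s i) =>
        T jj + v (jj 0) * ∏ k ∈ Finset.univ.erase (0 : Fin (d+1)), x k (jj k)) = 0 := by
  obtain ⟨x, hx, hmin⟩ := exists_unitInputs_vnorm_gmap_eq_tinf (fun i _ => hs i) T
  refine ⟨-gmap T x, x, hx, ?_, ?_⟩
  · rw [← hmin, ← vnorm_neg]
    exact tnorm_rankOneTensor _ hx
  · refine tinf_eq_zero_of_gmap_eq_zero (T := T + rankOneTensor (-gmap T x) x) hx ?_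
    rw [gmap_add, gmap_rankOneTensor_self _ hx, add_neg_cancel]

/-- Any order-`N` tensor `T` (`N = d+1 ≥ 2`, mode `0` output, all
dimensions positive) can be perturbed to have infinite condition number by a rank-one
perturbation `δT(i₁,…,i_N) = v(i₁) x₂(i₂) ⋯ x_N(i_N)` (with unit vectors `x₂,…,x_N`)
of spectral norm exactly `I(T) = ‖T‖₂/κ(T)`: `‖δT‖₂ = I(T)` and `I(T + δT) = 0`. -/
theorem rank_one_perturbation_to_infinite_cond {d : ℕ} (hd : 1 ≤ d)
    {s : Fin (d+1) → ℕ} (hs : ∀ i, 0 < s i)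
    (T : (∀ i, Fin (s i)) → ℝ) :
    ∃ (v : Fin (s 0) → ℝ) (x : ∀ i, Fin (s i) → ℝ), unitInputs x ∧
      tnorm (fun jj : ∀ i, Fin (s i) =>
        v (jj 0) * ∏ k ∈ Finset.univ.erase (0 : Fin (d+1)), x k (jj k)) = tinf T ∧
      tinf (fun jj : ∀ i, Fin (s i) =>
        T jj + v (jj 0) * ∏ k ∈ Finset.univ.erase (0 : Fin (d+1)), x k (jj k)) = 0 :=
  rank_one_perturbation_to_infinite_cond_general hs T
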